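/- Let G be a topological group equipped with its Borel σ-algebra, let μ be a finite tight Borel measure on G, and let Δ be a continuous right-invariant pseudometric on G. Then there exists a continuous right-invariant pseudometric Δ' on G such that for every f ∈ BLip_b(Δ) and all y, z ∈ G: |∫ f(x·y) dμ(x)| ≤ μ(G) and |∫ f(x·y) dμ(x) − ∫ f(x·z) dμ(x)| ≤ μ(G) · Δ'(y,z). -/

import Mathlib

/-!
For `f ∈ BLip_b(Δ)` we have `|f a - f b| ≤ min (Δ a b) 2`, so the difference of the two
integrals is at most `ρ(y, z) = ∫ min (Δ (x y) (x z)) 2 dμ(x)`. Because `Δ` is a right-invariant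
pseudometric, so is `ρ`, and `Δ' = ρ / μ(G)` works. Tightness is what makes `ρ` continuous without
any countability assumption on `G`: on a compact set `K` the tube lemma makes the integrand
uniformly small for `(y, z)` near `(y₀, z₀)`, while `Kᶜ` carries little mass.
-/

def IsPseudometric {X : Type*} (d : X → X → ℝ) : Prop :=
  (∀ x, d x x = 0) ∧ (∀ x y, d x y = d y x) ∧ (∀ x y, 0 ≤ d x y) ∧
    (∀ x y z, d x z ≤ d x y + d y z)

def BLipb {X : Type*} (d : X → X → ℝ) : Set (X → ℝ) :=
  {f | (∀ x, f x ∈ Set.Icc (-1 : ℝ) 1) ∧ ∀ x y, |f x - f y| ≤ d x y}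

def RightInvariant {G : Type*} [Group G] (d : G → G → ℝ) : Prop :=
  ∀ x y z : G, d (x * z) (y * z) = d x y

def LeftInvariant {G : Type*} [Group G] (d : G → G → ℝ) : Prop :=
  ∀ x y z : G, d (z * x) (z * y) = d x y

def ContPseudometric {G : Type*} [TopologicalSpace G] (d : G → G → ℝ) : Prop :=
  Continuous fun p : G × G => d p.1 p.2

def IsSIN (G : Type*) [Group G] [TopologicalSpace G] : Prop :=
  ∀ U ∈ nhds (1 : G), ∃ (d : G → G → ℝ) (ε : ℝ), IsPseudometric d ∧
    ContPseudometric d ∧ LeftInvariant d ∧ RightInvariant d ∧ 0 < ε ∧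
    {x : G | d x 1 < ε} ⊆ U

def IsTightMeas {G : Type*} [TopologicalSpace G] [MeasurableSpace G]
    (μ : MeasureTheory.Measure G) : Prop :=
  ∀ ε : ℝ, 0 < ε → ∃ K : Set G, IsCompact K ∧ μ Kᶜ < ENNReal.ofReal ε

open MeasureTheory Filter Topology Function

namespace IsPseudometric

variable {X Y : Type*} {d : X → X → ℝ}

theorem comp (hd : IsPseudometric d) (φ : Y → X) : IsPseudometric fun y z => d (φ y) (φ z) :=
  ⟨fun _ => hd.1 _, fun _ _ => hd.2.1 _ _, fun _ _ => hd.2.2.1 _ _, fun _ _ _ => hd.2.2.2 _ _ _⟩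

theorem min_const (hd : IsPseudometric d) {c : ℝ} (hc : 0 ≤ c) :
    IsPseudometric fun x y => min (d x y) c := by
  obtain ⟨hzero, hsymm, hnonneg, htri⟩ := hd
  refine ⟨fun x => by simp [hzero, hc], fun x y => by simp only [hsymm x y],
    fun x y => le_min (hnonneg x y) hc, fun x y z => ?_⟩
  have := htri x y z
  have := hnonneg x y
  have := hnonneg y z
  simp only [min_def]
  split_ifs <;> linarith

theorem div_const (hd : IsPseudometric d) {c : ℝ} (hc : 0 ≤ c) :
    IsPseudometric fun x y => d x y / c := by
  obtain ⟨hzero, hsymm, hnonneg, htri⟩ := hd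
  refine ⟨fun x => by simp [hzero], fun x y => by simp only [hsymm x y],
    fun x y => div_nonneg (hnonneg x y) hc, fun x y z => ?_⟩
  rw [← add_div]
  exact div_le_div_of_nonneg_right (htri x y z) hc

theorem abs_min_le (hd : IsPseudometric d) {c : ℝ} (hc : 0 ≤ c) (x y : X) :
    |min (d x y) c| ≤ c :=
  abs_le.2 ⟨by linarith [le_min (hd.2.2.1 x y) hc], min_le_right _ _⟩

theorem integral {Ω : Type*} [MeasurableSpace Ω] {μ : Measure Ω} {d : Ω → X → X → ℝ}
    (hd : ∀ ω, IsPseudometric (d ω)) (hint : ∀ x y, Integrable (fun ω => d ω x y) μ) :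
    IsPseudometric fun x y => ∫ ω, d ω x y ∂μ := by
  refine ⟨fun x => by simp [(hd _).1], fun x y => by simp only [(hd _).2.1 x y],
    fun x y => integral_nonneg fun ω => (hd ω).2.2.1 x y, fun x y z => ?_⟩
  rw [← integral_add (hint x y) (hint y z)]
  exact integral_mono (hint x z) ((hint x y).add (hint y z)) fun ω => (hd ω).2.2.2 x y z

end IsPseudometric

namespace BLipb

variable {X : Type*} {d : X → X → ℝ} {f : X → ℝ}

theorem abs_le_one (hf : f ∈ BLipb d) (x : X) : |f x| ≤ 1 :=
  abs_le.2 (hf.1 x)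

theorem abs_sub_le_min (hf : f ∈ BLipb d) (x y : X) : |f x - f y| ≤ min (d x y) 2 :=
  le_min (hf.2 x y) <| by linarith [abs_sub (f x) (f y), abs_le_one hf x, abs_le_one hf y]

theorem continuous [TopologicalSpace X] (hd : IsPseudometric d) (hcont : ContPseudometric d)
    (hf : f ∈ BLipb d) : Continuous f := by
  refine continuous_iff_continuousAt.2 fun x₀ => tendsto_iff_dist_tendsto_zero.2 ?_
  have hd₀ : Continuous fun x => d x x₀ :=
    Continuous.comp hcont (continuous_id.prodMk continuous_const)
  exact squeeze_zero (fun _ => dist_nonneg) (fun x => hf.2 x x₀)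
    (by simpa [hd.1 x₀] using hd₀.tendsto x₀)

theorem abs_integral_comp_le {Ω : Type*} [MeasurableSpace Ω] (μ : Measure Ω)
    [IsFiniteMeasure μ] (hf : f ∈ BLipb d) (φ : Ω → X) :
    |∫ ω, f (φ ω) ∂μ| ≤ μ.real Set.univ := by
  simpa using norm_integral_le_of_norm_le_const (f := fun ω => f (φ ω))
    (.of_forall fun ω => abs_le_one hf (φ ω))

end BLipb

section TightIntegral

variable {X Y : Type*} [MeasurableSpace X] {μ : Measure X} [IsFiniteMeasure μ]

theorem abs_integral_sub_integral_le {f g : X → ℝ} (hf : Integrable f μ)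
    (hg : Integrable g μ) {U : Set X} (hU : MeasurableSet U) {δ c : ℝ}
    (hδ : ∀ x ∈ U, |f x - g x| ≤ δ) (hc : ∀ x, |f x - g x| ≤ c) :
    |∫ x, f x ∂μ - ∫ x, g x ∂μ| ≤ δ * μ.real U + c * μ.real Uᶜ := by
  rw [← integral_sub hf hg, ← integral_add_compl hU (f := fun x => f x - g x) (hf.sub hg)]
  refine (abs_add_le _ _).trans (add_le_add ?_ ?_)
  · exact norm_setIntegral_le_of_norm_le_const (f := fun x => f x - g x)
      (measure_lt_top μ U) hδ
  · exact norm_setIntegral_le_of_norm_le_const (f := fun x => f x - g x)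
      (measure_lt_top μ Uᶜ) fun x _ => hc x

variable [TopologicalSpace X] [TopologicalSpace Y]

theorem continuous_integral_of_isTightMeas [OpensMeasurableSpace X] (hμ : IsTightMeas μ)
    {F : X → Y → ℝ} (hF : Continuous (uncurry F)) {C : ℝ} (hC : ∀ x y, |F x y| ≤ C) :
    Continuous fun y => ∫ x, F x y ∂μ := by
  refine continuous_iff_continuousAt.2 fun y₀ => Metric.tendsto_nhds.2 fun ε hε => ?_
  set m := μ.real Set.univ
  have hm : 0 ≤ m := measureReal_nonneg
  obtain ⟨δ, hδ, hδm⟩ : ∃ δ > 0, δ * m < ε / 2 := ⟨ε / (2 * (m + 1)), by positivity, by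
    rw [div_mul_eq_mul_div, div_lt_div_iff₀ (by positivity) two_pos]; nlinarith⟩
  obtain ⟨η, hη, hηC⟩ : ∃ η > 0, 2 * |C| * η < ε / 2 :=
    ⟨ε / (4 * (|C| + 1)), by positivity, by
      rw [mul_div_assoc', div_lt_div_iff₀ (by positivity) two_pos]; nlinarith [abs_nonneg C]⟩
  obtain ⟨K, hK, hKη⟩ := hμ η hη
  have hW : IsOpen {p : X × Y | |F p.1 p.2 - F p.1 y₀| < δ} :=
    isOpen_lt (by fun_prop) continuous_const
  obtain ⟨U, V, hU, hV, hKU, hy₀V, hUV⟩ := generalized_tube_lemma hK isCompact_singleton hW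
    fun ⟨x, y⟩ ⟨_, (hy : y = y₀)⟩ => by
      subst hy
      show |F x y - F x y| < δ
      simpa using hδ
  have hFint : ∀ y, Integrable (F · y) μ := fun y =>
    .of_bound (hF.comp (Continuous.prodMk_left y)).aestronglyMeasurable C (.of_forall (hC · y))
  filter_upwards [hV.mem_nhds (hy₀V rfl)] with y hy
  have hUc : μ.real Uᶜ ≤ η :=
    (measureReal_mono (Set.compl_subset_compl.2 hKU)).trans
      (ENNReal.toReal_le_of_le_ofReal (by positivity) hKη.le)
  have hUm : μ.real U ≤ m := measureReal_mono (Set.subset_univ U)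
  calc dist (∫ x, F x y ∂μ) (∫ x, F x y₀ ∂μ)
      ≤ δ * μ.real U + 2 * |C| * μ.real Uᶜ :=
        abs_integral_sub_integral_le (hFint y) (hFint y₀) hU.measurableSet
          (fun x hx => le_of_lt (hUV (Set.mk_mem_prod hx hy))) fun x => by
            linarith [abs_sub (F x y) (F x y₀), hC x y, hC x y₀, le_abs_self C]
    _ ≤ δ * m + 2 * |C| * η := by gcongr
    _ < ε := by linarith

end TightIntegral

section Group

variable {G : Type*} {Δ : G → G → ℝ}

/-- Truncating at `2`, the oscillation bound of `BLipb` functions, keeps the integrand bounded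
without weakening the Lipschitz estimate. -/
noncomputable def averagedDist [Mul G] [MeasurableSpace G] (μ : Measure G) (Δ : G → G → ℝ)
    (y z : G) : ℝ :=
  ∫ x, min (Δ (x * y) (x * z)) 2 ∂μ

theorem RightInvariant.averagedDist [Group G] [MeasurableSpace G] (hri : RightInvariant Δ)
    (μ : Measure G) : RightInvariant (averagedDist μ Δ) := by
  intro y z w
  simp only [_root_.averagedDist, ← mul_assoc, hri _ _ w]

variable [TopologicalSpace G] [Mul G] [ContinuousMul G]

theorem continuous_min_translate (hcont : ContPseudometric Δ) :
    Continuous fun p : G × (G × G) => min (Δ (p.1 * p.2.1) (p.1 * p.2.2)) 2 := by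
  have hmul : Continuous fun p : G × (G × G) => (p.1 * p.2.1, p.1 * p.2.2) := by fun_prop
  exact (Continuous.comp hcont hmul).min continuous_const

variable [MeasurableSpace G] [OpensMeasurableSpace G] (μ : Measure G) [IsFiniteMeasure μ]

theorem integrable_min_translate (hpm : IsPseudometric Δ) (hcont : ContPseudometric Δ)
    (y z : G) :
    Integrable (fun x => min (Δ (x * y) (x * z)) 2) μ :=
  .of_bound ((continuous_min_translate hcont).comp
      (continuous_id.prodMk (continuous_const (y := (y, z))))).aestronglyMeasurable
    2 (.of_forall fun _ => hpm.abs_min_le zero_le_two _ _)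

theorem IsPseudometric.averagedDist (hpm : IsPseudometric Δ) (hcont : ContPseudometric Δ) :
    IsPseudometric (averagedDist μ Δ) :=
  IsPseudometric.integral (fun x => (hpm.min_const zero_le_two).comp (x * ·))
    (integrable_min_translate μ hpm hcont)

theorem contPseudometric_averagedDist (hμ : IsTightMeas μ) (hpm : IsPseudometric Δ)
    (hcont : ContPseudometric Δ) : ContPseudometric (averagedDist μ Δ) :=
  continuous_integral_of_isTightMeas hμ
    (F := fun x (p : G × G) => min (Δ (x * p.1) (x * p.2)) 2) (continuous_min_translate hcont)
    fun _ _ => hpm.abs_min_le zero_le_two _ _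

theorem abs_integral_sub_le_averagedDist (hpm : IsPseudometric Δ) (hcont : ContPseudometric Δ)
    {f : G → ℝ} (hf : f ∈ BLipb Δ) (y z : G) :
    |∫ x, f (x * y) ∂μ - ∫ x, f (x * z) ∂μ| ≤ averagedDist μ Δ y z := by
  have hfc := BLipb.continuous hpm hcont hf
  have hint : ∀ y, Integrable (fun x => f (x * y)) μ := fun y =>
    .of_bound (hfc.comp (continuous_mul_const y)).aestronglyMeasurable 1
      (.of_forall fun _ => BLipb.abs_le_one hf _)
  rw [← integral_sub (hint y) (hint z)]
  exact norm_integral_le_of_norm_le (f := fun x => f (x * y) - f (x * z))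
    (integrable_min_translate μ hpm hcont y z) (.of_forall fun _ => BLipb.abs_sub_le_min hf _ _)

end Group

theorem convolved_family_equi_luc_general (G : Type*) [Group G] [TopologicalSpace G]
    [IsTopologicalGroup G] [MeasurableSpace G] [BorelSpace G]
    (μ : MeasureTheory.Measure G) [MeasureTheory.IsFiniteMeasure μ] (hμ : IsTightMeas μ)
    (Δ : G → G → ℝ) (hpm : IsPseudometric Δ) (hcont : ContPseudometric Δ)
    (hri : RightInvariant Δ) :
    ∃ Δ' : G → G → ℝ, IsPseudometric Δ' ∧ ContPseudometric Δ' ∧ RightInvariant Δ' ∧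
      ∀ f ∈ BLipb Δ, ∀ y z : G,
        |∫ x, f (x * y) ∂μ| ≤ (μ Set.univ).toReal ∧
        |(∫ x, f (x * y) ∂μ) - ∫ x, f (x * z) ∂μ| ≤ (μ Set.univ).toReal * Δ' y z := by
  set m := (μ Set.univ).toReal
  refine ⟨fun y z => averagedDist μ Δ y z / m,
    (hpm.averagedDist μ hcont).div_const ENNReal.toReal_nonneg,
    (contPseudometric_averagedDist μ hμ hpm hcont).div_const m,
    fun y z w => by simp only [hri.averagedDist μ y z w],
    fun f hf y z => ⟨BLipb.abs_integral_comp_le μ hf _, ?_⟩⟩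
  rcases eq_or_ne m 0 with hm | hm
  · simp [hm, Measure.measure_univ_eq_zero.1 ((measureReal_eq_zero_iff).1 hm)]
  · rw [mul_div_cancel₀ _ hm]
    exact abs_integral_sub_le_averagedDist μ hpm hcont hf y z

/-- for a finite tight Borel measure μ and a continuous right-invariant
pseudometric Δ, the functions y ↦ ∫ f(x·y) dμ(x), f ∈ BLip_b(Δ), are uniformly bounded
by μ(G) and uniformly Lipschitz for some continuous right-invariant pseudometric Δ'. -/
theorem convolved_family_equi_luc (G : Type*) [Group G] [TopologicalSpace G]
    [IsTopologicalGroup G] [T2Space G] [MeasurableSpace G] [BorelSpace G]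
    (μ : MeasureTheory.Measure G) [MeasureTheory.IsFiniteMeasure μ] (hμ : IsTightMeas μ)
    (Δ : G → G → ℝ) (hpm : IsPseudometric Δ) (hcont : ContPseudometric Δ)
    (hri : RightInvariant Δ) :
    ∃ Δ' : G → G → ℝ, IsPseudometric Δ' ∧ ContPseudometric Δ' ∧ RightInvariant Δ' ∧
      ∀ f ∈ BLipb Δ, ∀ y z : G,
        |∫ x, f (x * y) ∂μ| ≤ (μ Set.univ).toReal ∧
        |(∫ x, f (x * y) ∂μ) - ∫ x, f (x * z) ∂μ| ≤ (μ Set.univ).toReal * Δ' y z :=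
  convolved_family_equi_luc_general G μ hμ Δ hpm hcont hri
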